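/- Let μ and ν be probability measures on (0,∞), each with finite mean, and write μ̄(u) = μ((u,∞)). Let m ≥ 1, z_1,…,z_m ∈ ℝ and t_1,…,t_m ≥ 0. Then both of the following (complex-valued) Lebesgue integrals are absolutely convergent and equal: ∫_{−∞}^{∞} ∫_0^{∞} ∫_0^{∞} g(s,u,r) ds dμ(u) dν(r) = ∫_{−∞}^{∞} ∫_0^{∞} ∫_0^{∞} i·( exp( i Σ_{j=1}^m z_j r L_{t_j}(s−u,u) ) − 1 )·( Σ_{k=1}^m z_k r 1_{[0,t_k]}(s) )·μ̄(u) ds du dν(r). -/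

import Mathlib

/-!
For fixed `s` and `r`, write `Φ(u) = Σ_j z_j r L_{t_j}(s,u)`. Since `L_t(s,u) = ∫_s^{s+u} 1_{[0,t]}`
for `u ≥ 0`, `Φ` vanishes at `0` and has derivative `Σ_k z_k r 1_{[0,t_k]}(s+u)` off finitely many
points, so the fundamental theorem of calculus gives
`g(s,u,r) = e^{iΦ(u)} − 1 − iΦ(u) = ∫_0^u i (e^{iΦ(v)} − 1) Φ'(v) dv`.
Integrating in `u` against `μ` and exchanging the order of integration over `{0 < v < u}` replaces
`μ` by the tail `μ̄(v) dv` on `(0,∞)`; this is legitimate because `∫ u dμ < ∞`. Finally the shear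
`(s,v,r) ↦ (s − v,v,r)` preserves Lebesgue measure in `s` and moves `1_{[0,t_k]}(s + v)` to
`1_{[0,t_k]}(s)`.

Absolute convergence: `|g| ≤ 2|Φ|` and `g` vanishes unless `s ∈ [−u, Σ_j |t_j|]`; the second
integrand is at most `2 |r| |Σ_k z_k 1_{[0,t_k]}(s)| μ̄(u)`, a product of integrable functions of
`s`, `u` and `r`.
-/

open MeasureTheory Set Complex
open scoped ENNReal

/-- `L_t(s,u)`: the Lebesgue measure of `[0,t] ∩ [s,s+u]`. -/
noncomputable def sessLen (t s u : ℝ) : ℝ :=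
  (volume (Icc 0 t ∩ Icc s (s + u))).toReal

/-- `g(s,u,r) = exp(i Σ_j z_j r L_{t_j}(s,u)) − 1 − i Σ_j z_j r L_{t_j}(s,u)`. -/
noncomputable def gfun (m : ℕ) (z t : Fin m → ℝ) (s u r : ℝ) : ℂ :=
  Complex.exp (Complex.I * ((∑ j, z j * r * sessLen (t j) s u : ℝ) : ℂ)) - 1 -
    Complex.I * ((∑ j, z j * r * sessLen (t j) s u : ℝ) : ℂ)

lemma sessLen_eq_max (t s u : ℝ) : sessLen t s u = max (min t (s + u) - max 0 s) 0 := by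
  rw [sessLen, Icc_inter_Icc, Real.volume_Icc, ENNReal.toReal_ofReal']

lemma sessLen_nonneg (t s u : ℝ) : 0 ≤ sessLen t s u := ENNReal.toReal_nonneg

lemma sessLen_le_abs (t s u : ℝ) : sessLen t s u ≤ |t| := by
  rw [sessLen_eq_max]
  exact max_le (by linarith [min_le_left t (s + u), le_max_left 0 s, le_abs_self t])
    (abs_nonneg t)

lemma sessLen_of_nonpos (t s : ℝ) {u : ℝ} (hu : u ≤ 0) : sessLen t s u = 0 := by
  rw [sessLen_eq_max, max_eq_right]
  linarith [min_le_right t (s + u), le_max_right 0 s]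

lemma sessLen_of_notMem_Icc {t s u : ℝ} (hs : s ∉ Icc (-u) t) : sessLen t s u = 0 := by
  rw [mem_Icc, not_and_or, not_le, not_le] at hs
  rw [sessLen_eq_max, max_eq_right]
  rcases hs with hs | hs
  · linarith [min_le_right t (s + u), le_max_left 0 s]
  · linarith [min_le_left t (s + u), le_max_right 0 s]

lemma continuous_sessLen (t : ℝ) : Continuous fun p : ℝ × ℝ => sessLen t p.1 p.2 := by
  simp only [sessLen_eq_max]
  fun_prop

lemma sessLen_eq_intervalIntegral (t s : ℝ) {u : ℝ} (hu : 0 ≤ u) :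
    sessLen t s u = ∫ y in s..s + u, (Icc 0 t).indicator (fun _ => (1 : ℝ)) y := by
  rw [intervalIntegral.integral_of_le (by linarith), integral_indicator_const _ measurableSet_Icc,
    smul_eq_mul, mul_one, measureReal_def, Measure.restrict_apply measurableSet_Icc, sessLen,
    measure_congr ((ae_eq_refl (Icc 0 t)).inter Ioc_ae_eq_Icc)]

lemma frontier_Icc_subset (a b : ℝ) : frontier (Icc a b) ⊆ {a, b} := by
  rcases le_or_gt a b with h | h
  · rw [frontier_Icc h]
  · simp [Icc_eq_empty_of_lt h]

lemma hasDerivAt_sessLen {t s v : ℝ} (hv : 0 < v) (hs : s + v ∉ frontier (Icc 0 t)) :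
    HasDerivAt (sessLen t s) ((Icc 0 t).indicator (fun _ => (1 : ℝ)) (s + v)) v := by
  have hind : Integrable ((Icc 0 t).indicator fun _ => (1 : ℝ)) :=
    (integrable_indicator_iff measurableSet_Icc).2 (integrableOn_const (by simp))
  have hprim : HasDerivAt (fun x => ∫ y in s..x, (Icc 0 t).indicator (fun _ => (1 : ℝ)) y)
      ((Icc 0 t).indicator (fun _ => (1 : ℝ)) (s + v)) (s + v) :=
    intervalIntegral.integral_hasDerivAt_right hind.intervalIntegrable
      hind.aestronglyMeasurable.stronglyMeasurableAtFilter
      (continuousOn_const.continuousAt_indicator hs)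
  refine hprim.comp_const_add s v |>.congr_of_eventuallyEq ?_
  filter_upwards [eventually_gt_nhds hv] with u hu using sessLen_eq_intervalIntegral t s hu.le

lemma norm_cexp_I_mul_sub_one_sub_le (x : ℝ) : ‖cexp (I * x) - 1 - I * x‖ ≤ 2 * |x| := by
  calc ‖cexp (I * x) - 1 - I * x‖ ≤ ‖cexp (I * x) - 1‖ + ‖I * (x : ℂ)‖ := norm_sub_le _ _
    _ ≤ |x| + |x| := by
      gcongr
      · exact Real.norm_exp_I_mul_ofReal_sub_one_le
      · simp
    _ = 2 * |x| := by ring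

lemma norm_I_mul_cexp_sub_one_mul_le (x : ℝ) (w : ℂ) :
    ‖I * (cexp (I * x) - 1) * w‖ ≤ 2 * ‖w‖ := by
  rw [norm_mul, norm_mul, norm_I, one_mul]
  gcongr
  exact (norm_sub_le _ _).trans (by rw [norm_exp_I_mul_ofReal, norm_one]; norm_num)

theorem integral_I_mul_cexp_sub_one_mul_eq {Φ φ : ℝ → ℝ} {a b : ℝ} (hab : a ≤ b) {S : Set ℝ}
    (hS : S.Countable) (hΦc : ContinuousOn Φ (Icc a b))
    (hΦ : ∀ x ∈ Ioo a b \ S, HasDerivAt Φ (φ x) x) (hφ : IntervalIntegrable φ volume a b) :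
    ∫ x in a..b, I * (cexp (I * Φ x) - 1) * φ x =
      (cexp (I * Φ b) - 1 - I * Φ b) - (cexp (I * Φ a) - 1 - I * Φ a) := by
  have hΦc' : ContinuousOn (fun x => (Φ x : ℂ)) (Icc a b) :=
    continuous_ofReal.comp_continuousOn hΦc
  refine integral_eq_of_hasDerivAt_off_countable_of_le
    (fun x => cexp (I * Φ x) - 1 - I * Φ x) _ hab hS (by fun_prop) (fun x hx => ?_) ?_
  · have h := (hΦ x hx).ofReal_comp.const_mul I
    exact ((h.cexp.sub_const 1).sub h).congr_deriv (by ring)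
  · have hφ' : IntervalIntegrable (fun x => (φ x : ℂ)) volume a b := ⟨hφ.1.ofReal, hφ.2.ofReal⟩
    refine hφ'.continuousOn_mul ?_
    rw [uIcc_of_le hab]
    fun_prop

section Tail

variable (μ : Measure ℝ)

lemma measurable_measure_Ioi : Measurable fun v => μ (Ioi v) :=
  Antitone.measurable fun _ _ h => measure_mono (Ioi_subset_Ioi h)

lemma measurableSet_setOf_pos_lt : MeasurableSet {p : ℝ × ℝ | 0 < p.2 ∧ p.2 < p.1} :=
  (measurableSet_lt measurable_const measurable_snd).inter
    (measurableSet_lt measurable_snd measurable_fst)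

lemma prod_volume_setOf_pos_lt :
    (μ.prod volume) {p : ℝ × ℝ | 0 < p.2 ∧ p.2 < p.1} = ∫⁻ u, ENNReal.ofReal u ∂μ := by
  rw [Measure.prod_apply measurableSet_setOf_pos_lt]
  refine lintegral_congr fun u => ?_
  rw [show Prod.mk u ⁻¹' {p : ℝ × ℝ | 0 < p.2 ∧ p.2 < p.1} = Ioo 0 u from rfl,
    Real.volume_Ioo, sub_zero]

variable [SFinite μ]

lemma lintegral_measure_Ioi : ∫⁻ v in Ioi 0, μ (Ioi v) = ∫⁻ u, ENNReal.ofReal u ∂μ := by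
  rw [← prod_volume_setOf_pos_lt, Measure.prod_apply_symm measurableSet_setOf_pos_lt,
    ← lintegral_indicator measurableSet_Ioi]
  refine lintegral_congr fun v => ?_
  by_cases hv : 0 < v
  · simp [hv, Ioi]
  · simp [hv]

variable {μ}

lemma integrableOn_measureReal_Ioi (hμ : ∫⁻ u, ENNReal.ofReal u ∂μ ≠ ∞) :
    IntegrableOn (fun v => μ.real (Ioi v)) (Ioi 0) :=
  integrable_toReal_of_lintegral_ne_top (measurable_measure_Ioi μ).aemeasurable
    ((lintegral_measure_Ioi μ).trans_ne hμ)

theorem integral_setIntegral_Ioo_eq {E : Type*} [NormedAddCommGroup E] [NormedSpace ℝ E]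
    [CompleteSpace E] (hμ : ∫⁻ u, ENNReal.ofReal u ∂μ ≠ ∞) {k : ℝ → E}
    (hk : AEStronglyMeasurable k) {C : ℝ} (hC : ∀ v, ‖k v‖ ≤ C) :
    ∫ u, (∫ v in Ioo 0 u, k v) ∂μ = ∫ v in Ioi 0, μ.real (Ioi v) • k v := by
  set A := {p : ℝ × ℝ | 0 < p.2 ∧ p.2 < p.1}
  have hint : Integrable (A.indicator fun p => k p.2) (μ.prod volume) := by
    refine (integrable_indicator_iff measurableSet_setOf_pos_lt).2 ?_
    refine Measure.integrableOn_of_bounded ?_ hk.comp_snd (ae_of_all _ fun p => hC p.2)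
    rwa [prod_volume_setOf_pos_lt]
  have hleft (u : ℝ) : ∫ v, A.indicator (fun p => k p.2) (u, v) = ∫ v in Ioo 0 u, k v := by
    rw [← integral_indicator measurableSet_Ioo]
    rfl
  have hright (v : ℝ) : ∫ u, A.indicator (fun p => k p.2) (u, v) ∂μ =
      (Ioi 0).indicator (fun v => μ.real (Ioi v) • k v) v := by
    by_cases hv : 0 < v
    · rw [indicator_of_mem (mem_Ioi.2 hv), ← integral_indicator_const _ measurableSet_Ioi]
      congr 1 with u
      by_cases hu : v < u <;> simp [A, hv, hu]
    · rw [indicator_of_notMem (mt mem_Ioi.1 hv)]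
      exact integral_eq_zero_of_ae (ae_of_all _ fun u => indicator_of_notMem (fun h => hv h.1) _)
  calc ∫ u, (∫ v in Ioo 0 u, k v) ∂μ = ∫ u, (∫ v, A.indicator (fun p => k p.2) (u, v)) ∂μ :=
        integral_congr_ae (ae_of_all μ fun u => (hleft u).symm)
    _ = ∫ v, ∫ u, A.indicator (fun p => k p.2) (u, v) ∂μ :=
        integral_integral_swap (f := fun u v => A.indicator (fun p => k p.2) (u, v)) hint
    _ = ∫ v, (Ioi 0).indicator (fun v => μ.real (Ioi v) • k v) v :=
        integral_congr_ae (ae_of_all _ hright)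
    _ = ∫ v in Ioi 0, μ.real (Ioi v) • k v := integral_indicator measurableSet_Ioi

end Tail

lemma measurePreserving_sub_fst {α : Type*} [MeasurableSpace α] (Q : Measure α) [SFinite Q]
    {c : α → ℝ} (hc : Measurable c) :
    MeasurePreserving (fun q : ℝ × α => (q.1 - c q.2, q.2)) (volume.prod Q) (volume.prod Q) := by
  have h := (MeasurePreserving.id Q).skew_product (g := fun a s => s - c a) (by fun_prop)
    (ae_of_all _ fun a => map_sub_right_eq_self volume (c a))
  exact (Measure.measurePreserving_swap.comp h).comp Measure.measurePreserving_swap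

theorem integrable_prod_of_norm_le_indicator_Icc {α E : Type*} [MeasurableSpace α]
    [NormedAddCommGroup E] {Q : Measure α} [SFinite Q] {f : ℝ × α → E}
    (hf : AEStronglyMeasurable f (volume.prod Q)) {a b c : α → ℝ}
    (hc : Integrable (fun p => (b p - a p) * c p) Q)
    (hfc : ∀ s p, ‖f (s, p)‖ ≤ (Icc (a p) (b p)).indicator (fun _ => c p) s) :
    Integrable f (volume.prod Q) := by
  have hind (p : α) : Integrable ((Icc (a p) (b p)).indicator fun _ => c p) :=
    (integrable_indicator_iff measurableSet_Icc).2 (integrableOn_const (by simp))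
  rw [integrable_prod_iff' hf]
  refine ⟨hf.prodMk_right.mono fun p hp => (hind p).mono' hp (ae_of_all _ (hfc · p)),
    hc.norm.mono' hf.prod_swap.norm.integral_prod_right' (ae_of_all _ fun p => ?_)⟩
  rw [Real.norm_of_nonneg (integral_nonneg fun _ => norm_nonneg _)]
  calc ∫ s, ‖f (s, p)‖ ≤ ∫ s, (Icc (a p) (b p)).indicator (fun _ => c p) s :=
        integral_mono_of_nonneg (ae_of_all _ fun _ => norm_nonneg _) (hind p)
          (ae_of_all _ (hfc · p))
    _ = max (b p - a p) 0 * c p := by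
        rw [integral_indicator_const _ measurableSet_Icc, Real.volume_real_Icc, smul_eq_mul]
    _ ≤ ‖(b p - a p) * c p‖ := by
        rcases le_total (b p - a p) 0 with h | h
        · rw [max_eq_right h, zero_mul]
          exact norm_nonneg _
        · rw [max_eq_left h]
          exact Real.le_norm_self _

variable {m : ℕ} (z t : Fin m → ℝ)

noncomputable def phase (s u r : ℝ) : ℝ := ∑ j, z j * r * sessLen (t j) s u

/-- `phaseRate z t r (s + u) = ∂ phase z t s u r / ∂u` for `u > 0`, away from finitely many `u`. -/
noncomputable def phaseRate (r y : ℝ) : ℝ :=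
  ∑ k, z k * r * (Icc 0 (t k)).indicator (fun _ => 1) y

/-- `∂g(s,u,r)/∂u` at `u = v`, away from finitely many `v`. -/
noncomputable def gfunDeriv (s v r : ℝ) : ℂ :=
  I * (cexp (I * phase z t s v r) - 1) * phaseRate z t r (s + v)

lemma gfun_eq (s u r : ℝ) :
    gfun m z t s u r = cexp (I * phase z t s u r) - 1 - I * phase z t s u r := rfl

lemma phase_of_nonpos (s r : ℝ) {u : ℝ} (hu : u ≤ 0) : phase z t s u r = 0 := by
  simp [phase, sessLen_of_nonpos _ _ hu]

lemma phase_of_notMem_Icc {s u : ℝ} (hs : s ∉ Icc (-u) (∑ j, |t j|)) (r : ℝ) :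
    phase z t s u r = 0 := by
  refine Finset.sum_eq_zero fun j _ => ?_
  rw [sessLen_of_notMem_Icc fun h => hs ⟨h.1, h.2.trans ?_⟩, mul_zero]
  exact (le_abs_self _).trans
    (Finset.single_le_sum (fun k _ => abs_nonneg (t k)) (Finset.mem_univ j))

lemma abs_phase_le (s u r : ℝ) : |phase z t s u r| ≤ |r| * ∑ j, |z j| * |t j| := by
  rw [Finset.mul_sum]
  refine (Finset.abs_sum_le_sum_abs _ _).trans (Finset.sum_le_sum fun j _ => ?_)
  rw [abs_mul, abs_mul, abs_of_nonneg (sessLen_nonneg _ _ _)]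
  have := sessLen_le_abs (t j) s u
  calc |z j| * |r| * sessLen (t j) s u ≤ |z j| * |r| * |t j| := by gcongr
    _ = |r| * (|z j| * |t j|) := by ring

lemma continuous_phase : Continuous fun q : ℝ × ℝ × ℝ => phase z t q.1 q.2.1 q.2.2 := by
  have h : ∀ j, Continuous fun q : ℝ × ℝ × ℝ => sessLen (t j) q.1 q.2.1 := fun j =>
    (continuous_sessLen (t j)).comp (continuous_fst.prodMk continuous_snd.fst)
  unfold phase
  fun_prop

lemma hasDerivAt_phase {s v : ℝ} (hv : 0 < v) (hs : s + v ∉ insert 0 (range t)) (r : ℝ) :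
    HasDerivAt (fun u => phase z t s u r) (phaseRate z t r (s + v)) v := by
  refine HasDerivAt.fun_sum fun j _ => (hasDerivAt_sessLen hv fun h => hs ?_).const_mul _
  rcases frontier_Icc_subset 0 (t j) h with h | h
  · exact Or.inl h
  · exact Or.inr ⟨j, h.symm⟩

lemma measurable_phaseRate : Measurable fun p : ℝ × ℝ => phaseRate z t p.1 p.2 := by
  have h : ∀ k, Measurable fun p : ℝ × ℝ => (Icc 0 (t k)).indicator (fun _ => (1 : ℝ)) p.2 :=
    fun k => (measurable_const.indicator measurableSet_Icc).comp measurable_snd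
  unfold phaseRate
  fun_prop

lemma integrable_phaseRate (r : ℝ) : Integrable (phaseRate z t r) := by
  refine integrable_finsetSum _ fun k _ => ?_
  exact ((integrable_indicator_iff measurableSet_Icc).2 (integrableOn_const (by simp))).const_mul _

lemma phaseRate_eq_mul (r y : ℝ) : phaseRate z t r y = r * phaseRate z t 1 y := by
  simp only [phaseRate, Finset.mul_sum]
  exact Finset.sum_congr rfl fun k _ => by ring

lemma abs_phaseRate_le (r y : ℝ) : |phaseRate z t r y| ≤ |r| * ∑ k, |z k| := by
  rw [Finset.mul_sum]
  refine (Finset.abs_sum_le_sum_abs _ _).trans (Finset.sum_le_sum fun k _ => ?_)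
  have : |(Icc 0 (t k)).indicator (fun _ => (1 : ℝ)) y| ≤ 1 := by
    by_cases h : y ∈ Icc 0 (t k) <;> simp [h]
  calc |z k * r * (Icc 0 (t k)).indicator (fun _ => (1 : ℝ)) y|
      = |z k| * |r| * |(Icc 0 (t k)).indicator (fun _ => (1 : ℝ)) y| := by rw [abs_mul, abs_mul]
    _ ≤ |z k| * |r| * 1 := by gcongr
    _ = |r| * |z k| := by ring

lemma gfun_eq_integral_gfunDeriv (s u r : ℝ) :
    gfun m z t s u r = ∫ v in Ioo 0 u, gfunDeriv z t s v r := by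
  rcases le_or_gt u 0 with hu | hu
  · simp [gfun_eq, phase_of_nonpos z t s r hu, Ioo_eq_empty_of_le hu]
  have hS : ((s + ·) ⁻¹' insert 0 (range t)).Countable :=
    (((finite_range t).insert 0).preimage (add_right_injective s).injOn).countable
  have hΦc : ContinuousOn (fun v => phase z t s v r) (Icc 0 u) :=
    ((continuous_phase z t).comp (by fun_prop : Continuous fun v : ℝ => (s, v, r))).continuousOn
  have hφ : IntervalIntegrable (fun v => phaseRate z t r (s + v)) volume 0 u :=
    ((integrable_phaseRate z t r).comp_add_left s).intervalIntegrable
  have key := integral_I_mul_cexp_sub_one_mul_eq hu.le hS hΦc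
    (fun v hv => hasDerivAt_phase z t hv.1.1 hv.2 r) hφ
  rw [phase_of_nonpos z t s r le_rfl, intervalIntegral.integral_of_le hu.le,
    integral_Ioc_eq_integral_Ioo] at key
  simpa [gfunDeriv, gfun_eq] using key.symm

lemma norm_gfunDeriv_le (s v r : ℝ) : ‖gfunDeriv z t s v r‖ ≤ 2 * (|r| * ∑ k, |z k|) := by
  refine (norm_I_mul_cexp_sub_one_mul_le _ _).trans ?_
  rw [norm_real, Real.norm_eq_abs]
  gcongr
  exact abs_phaseRate_le z t r (s + v)

lemma gfunDeriv_sub_self (s v r : ℝ) :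
    gfunDeriv z t (s - v) v r = I * (cexp (I * phase z t (s - v) v r) - 1) * phaseRate z t r s := by
  rw [gfunDeriv, sub_add_cancel]

lemma measurable_gfunDeriv : Measurable fun q : ℝ × ℝ × ℝ => gfunDeriv z t q.1 q.2.1 q.2.2 := by
  have hΦ := (continuous_phase z t).measurable
  have hφ := (measurable_phaseRate z t).comp (f := fun q : ℝ × ℝ × ℝ => (q.2.2, q.1 + q.2.1))
    (by fun_prop)
  unfold gfunDeriv
  fun_prop

lemma norm_gfun_le_indicator (s u r : ℝ) :
    ‖gfun m z t s u r‖ ≤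
      (Icc (-u) (∑ j, |t j|)).indicator (fun _ => 2 * (|r| * ∑ j, |z j| * |t j|)) s := by
  by_cases hs : s ∈ Icc (-u) (∑ j, |t j|)
  · rw [indicator_of_mem hs, gfun_eq]
    refine (norm_cexp_I_mul_sub_one_sub_le _).trans ?_
    gcongr
    exact abs_phase_le z t s u r
  · rw [indicator_of_notMem hs, gfun_eq, phase_of_notMem_Icc z t hs]
    simp

section Integrals

variable {μ ν : Measure ℝ}

lemma integral_gfun_eq_setIntegral [SFinite μ] (hμ : ∫⁻ u, ENNReal.ofReal u ∂μ ≠ ∞)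
    (s r : ℝ) :
    ∫ u, gfun m z t s u r ∂μ = ∫ v in Ioi 0, gfunDeriv z t s v r * μ.real (Ioi v) := by
  simp_rw [gfun_eq_integral_gfunDeriv]
  rw [integral_setIntegral_Ioo_eq hμ (k := fun v => gfunDeriv z t s v r)
    ((measurable_gfunDeriv z t).comp (f := fun v => (s, v, r)) (by fun_prop)).aestronglyMeasurable
    (norm_gfunDeriv_le z t s · r)]
  simp_rw [Complex.real_smul, mul_comm]

lemma integrable_gfun [IsFiniteMeasure μ] [IsFiniteMeasure ν] (hμ : Integrable (fun x => x) μ)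
    (hν : Integrable (fun x => x) ν) :
    Integrable (fun q : ℝ × ℝ × ℝ => gfun m z t q.1 q.2.1 q.2.2) (volume.prod (μ.prod ν)) := by
  have hg : Continuous fun q : ℝ × ℝ × ℝ => gfun m z t q.1 q.2.1 q.2.2 := by
    have := continuous_phase z t
    simp only [gfun_eq]
    fun_prop
  refine integrable_prod_of_norm_le_indicator_Icc hg.aestronglyMeasurable
    (a := fun p => -p.1) (b := fun _ => ∑ j, |t j|)
    (c := fun p => 2 * (|p.2| * ∑ j, |z j| * |t j|)) ?_ fun s p => norm_gfun_le_indicator z t s _ _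
  exact ((integrable_const _).sub hμ.neg).mul_prod (((hν.abs).mul_const _).const_mul 2)

lemma measurable_gfunDeriv_mul :
    Measurable fun q : ℝ × ℝ × ℝ => gfunDeriv z t q.1 q.2.1 q.2.2 * μ.real (Ioi q.2.1) :=
  (measurable_gfunDeriv z t).mul (measurable_ofReal.comp
    ((measurable_measure_Ioi μ).ennreal_toReal.comp measurable_snd.fst))

lemma integrable_gfunDeriv_sub_mul [SFinite μ] [SFinite ν]
    (hμ : ∫⁻ u, ENNReal.ofReal u ∂μ ≠ ∞) (hν : Integrable (fun x => x) ν) :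
    Integrable (fun q : ℝ × ℝ × ℝ => gfunDeriv z t (q.1 - q.2.1) q.2.1 q.2.2 * μ.real (Ioi q.2.1))
      (volume.prod ((volume.restrict (Ioi 0)).prod ν)) := by
  have hD := ((integrable_phaseRate z t 1).abs.const_mul 2).mul_prod
    ((integrableOn_measureReal_Ioi hμ).mul_prod hν.abs)
  refine hD.mono' ((measurable_gfunDeriv_mul z t).comp
    (by fun_prop : Measurable fun q : ℝ × ℝ × ℝ => (q.1 - q.2.1, q.2))).aestronglyMeasurable
    (ae_of_all _ fun q => ?_)
  rw [norm_mul, norm_real, Real.norm_of_nonneg measureReal_nonneg, gfunDeriv_sub_self]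
  calc _ ≤ 2 * ‖(phaseRate z t q.2.2 q.1 : ℂ)‖ * μ.real (Ioi q.2.1) := by
        gcongr
        exact norm_I_mul_cexp_sub_one_mul_le _ _
    _ = 2 * |phaseRate z t 1 q.1| * (μ.real (Ioi q.2.1) * |q.2.2|) := by
        rw [norm_real, Real.norm_eq_abs, phaseRate_eq_mul, abs_mul]
        ring

lemma integral_gfunDeriv_sub_mul [SFinite ν] :
    ∫ q : ℝ × ℝ × ℝ, gfunDeriv z t (q.1 - q.2.1) q.2.1 q.2.2 * μ.real (Ioi q.2.1)
        ∂(volume.prod ((volume.restrict (Ioi 0)).prod ν)) =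
      ∫ q : ℝ × ℝ × ℝ, gfunDeriv z t q.1 q.2.1 q.2.2 * μ.real (Ioi q.2.1)
        ∂(volume.prod ((volume.restrict (Ioi 0)).prod ν)) := by
  have h := measurePreserving_sub_fst ((volume.restrict (Ioi 0)).prod ν) measurable_fst
  rw [← integral_map h.measurable.aemeasurable
    (measurable_gfunDeriv_mul z t).aestronglyMeasurable, h.map_eq]

lemma integrable_gfunDeriv_mul [SFinite μ] [SFinite ν] (hμ : ∫⁻ u, ENNReal.ofReal u ∂μ ≠ ∞)
    (hν : Integrable (fun x => x) ν) :
    Integrable (fun q : ℝ × ℝ × ℝ => gfunDeriv z t q.1 q.2.1 q.2.2 * μ.real (Ioi q.2.1))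
      (volume.prod ((volume.restrict (Ioi 0)).prod ν)) :=
  ((measurePreserving_sub_fst _ measurable_fst).integrable_comp
    (measurable_gfunDeriv_mul z t).aestronglyMeasurable).1 (integrable_gfunDeriv_sub_mul z t hμ hν)

theorem integral_gfun_eq_integral_gfunDeriv_mul [IsFiniteMeasure μ] [IsFiniteMeasure ν]
    (hμ : Integrable (fun x => x) μ) (hν : Integrable (fun x => x) ν) :
    ∫ q : ℝ × ℝ × ℝ, gfun m z t q.1 q.2.1 q.2.2 ∂(volume.prod (μ.prod ν)) =
      ∫ q : ℝ × ℝ × ℝ, gfunDeriv z t q.1 q.2.1 q.2.2 * μ.real (Ioi q.2.1)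
        ∂(volume.prod ((volume.restrict (Ioi 0)).prod ν)) := by
  have hg := integrable_gfun z t hμ hν
  have hH := integrable_gfunDeriv_mul z t hμ.lintegral_lt_top.ne hν
  rw [integral_prod _ hg, integral_prod _ hH]
  refine integral_congr_ae ?_
  filter_upwards [hg.prod_right_ae, hH.prod_right_ae] with s hgs hHs
  rw [integral_prod_symm (fun p : ℝ × ℝ => gfun m z t s p.1 p.2) hgs,
    integral_prod_symm (fun p : ℝ × ℝ => gfunDeriv z t s p.1 p.2 * μ.real (Ioi p.1)) hHs]
  exact integral_congr_ae (ae_of_all _ fun r =>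
    integral_gfun_eq_setIntegral z t hμ.lintegral_lt_top.ne s r)

end Integrals

theorem gfun_integral_by_parts_general
    (μ ν : Measure ℝ) (hμ : IsProbabilityMeasure μ) (hν : IsProbabilityMeasure ν)
    (hμmean : Integrable (fun x : ℝ => x) μ) (hνmean : Integrable (fun x : ℝ => x) ν)
    (m : ℕ) (z t : Fin m → ℝ) :
    Integrable (fun q : ℝ × ℝ × ℝ => gfun m z t q.1 q.2.1 q.2.2)
      (volume.prod (μ.prod ν)) ∧
    Integrable
      (fun q : ℝ × ℝ × ℝ =>
        Complex.I *
          (Complex.exp (Complex.I *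
              ((∑ j, z j * q.2.2 * sessLen (t j) (q.1 - q.2.1) q.2.1 : ℝ) : ℂ)) - 1) *
          ((∑ k, z k * q.2.2 * (Icc (0 : ℝ) (t k)).indicator (fun _ => (1 : ℝ)) q.1 : ℝ) : ℂ) *
          (((μ (Ioi q.2.1)).toReal : ℝ) : ℂ))
      (volume.prod ((volume.restrict (Ioi (0 : ℝ))).prod ν)) ∧
    (∫ q : ℝ × ℝ × ℝ, gfun m z t q.1 q.2.1 q.2.2 ∂(volume.prod (μ.prod ν)))
      = ∫ q : ℝ × ℝ × ℝ,
          Complex.I *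
            (Complex.exp (Complex.I *
                ((∑ j, z j * q.2.2 * sessLen (t j) (q.1 - q.2.1) q.2.1 : ℝ) : ℂ)) - 1) *
            ((∑ k, z k * q.2.2 * (Icc (0 : ℝ) (t k)).indicator (fun _ => (1 : ℝ)) q.1 : ℝ) : ℂ) *
            (((μ (Ioi q.2.1)).toReal : ℝ) : ℂ)
          ∂(volume.prod ((volume.restrict (Ioi (0 : ℝ))).prod ν)) := by
  have := hμ
  have := hν
  have hR := integrable_gfunDeriv_sub_mul z t hμmean.lintegral_lt_top.ne hνmean
  have hRH := integral_gfunDeriv_sub_mul z t (μ := μ) (ν := ν)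
  simp only [gfunDeriv_sub_self] at hR hRH
  exact ⟨integrable_gfun z t hμmean hνmean, hR,
    (integral_gfun_eq_integral_gfunDeriv_mul z t hμmean hνmean).trans hRH.symm⟩

/-- Integration by parts in `u` together with the change of variables `s ↦ s + u`:
`∫∫∫ g(s,u,r) ds dμ(u) dν(r)` equals
`∫∫∫ i (exp(i Σ_j z_j r L_{t_j}(s−u,u)) − 1)(Σ_k z_k r 1_{[0,t_k]}(s)) μ̄(u) ds du dν(r)`,
both integrals being absolutely convergent. -/
theorem gfun_integral_by_parts
    (μ ν : Measure ℝ) (hμ : IsProbabilityMeasure μ) (hν : IsProbabilityMeasure ν)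
    (hμ0 : μ (Iic 0) = 0) (hν0 : ν (Iic 0) = 0)
    (hμmean : Integrable (fun x : ℝ => x) μ) (hνmean : Integrable (fun x : ℝ => x) ν)
    (m : ℕ) (hm : 1 ≤ m) (z t : Fin m → ℝ) (ht : ∀ j, 0 ≤ t j) :
    Integrable (fun q : ℝ × ℝ × ℝ => gfun m z t q.1 q.2.1 q.2.2)
      (volume.prod (μ.prod ν)) ∧
    Integrable
      (fun q : ℝ × ℝ × ℝ =>
        Complex.I *
          (Complex.exp (Complex.I *
              ((∑ j, z j * q.2.2 * sessLen (t j) (q.1 - q.2.1) q.2.1 : ℝ) : ℂ)) - 1) *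
          ((∑ k, z k * q.2.2 * (Icc (0 : ℝ) (t k)).indicator (fun _ => (1 : ℝ)) q.1 : ℝ) : ℂ) *
          (((μ (Ioi q.2.1)).toReal : ℝ) : ℂ))
      (volume.prod ((volume.restrict (Ioi (0 : ℝ))).prod ν)) ∧
    (∫ q : ℝ × ℝ × ℝ, gfun m z t q.1 q.2.1 q.2.2 ∂(volume.prod (μ.prod ν)))
      = ∫ q : ℝ × ℝ × ℝ,
          Complex.I *
            (Complex.exp (Complex.I *
                ((∑ j, z j * q.2.2 * sessLen (t j) (q.1 - q.2.1) q.2.1 : ℝ) : ℂ)) - 1) *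
            ((∑ k, z k * q.2.2 * (Icc (0 : ℝ) (t k)).indicator (fun _ => (1 : ℝ)) q.1 : ℝ) : ℂ) *
            (((μ (Ioi q.2.1)).toReal : ℝ) : ℂ)
          ∂(volume.prod ((volume.restrict (Ioi (0 : ℝ))).prod ν)) :=
  gfun_integral_by_parts_general μ ν hμ hν hμmean hνmean m z t
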